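/- arXiv:2402.13009 — 2 statements merged into one kernel-verified Lean document; each statement's English description precedes it below -/
import Mathlib

section
/- (Theorem 4, invariant form.) Let N be a finite set of voters, 𝒞 an M-winning coalition set on N, and S = (S_1,…,S_K) a sequence of nonempty, pairwise distinct subsets of N with S_K a singleton, such that for every C ∈ 𝒞 there exists k ∈ {1,…,K} with S_k ⊆ C and S_l ∩ C ≠ ∅ for all l < k (the property guaranteed of every output of Algorithm 1 on 𝒞). Then for every neutral and strategy-proof full-domain rule f and every full profile R̃ : N → Option Bool, 𝒞^f R̃ = 𝒮^f R̃. -/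
/-- A rule is strategy-proof if whenever a voter's misreport would give his true
preference, truthful reporting gives it as well. -/
def StrategyProof {N : Type*} [DecidableEq N] (f : (N → Bool) → Bool) : Prop :=
  ∀ (R : N → Bool) (i : N) (b : Bool), f (Function.update R i b) = R i → f R = R i

/-- A rule is neutral if it commutes with flipping the two candidates. -/
def Neutral {N : Type*} (f : (N → Bool) → Bool) : Prop :=
  ∀ R : N → Bool, f (fun i => !(R i)) = !(f R)

/-- An M-winning coalition set: nonempty, members nonempty, minimality (P1),
and Moulin's property (P2). -/
def IsMWCS {N : Type*} [DecidableEq N] (𝒞 : Set (Finset N)) : Prop :=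
  𝒞.Nonempty ∧ (∀ C ∈ 𝒞, C.Nonempty) ∧
    (∀ C ∈ 𝒞, ∀ C' ∈ 𝒞, C ⊆ C' → C = C') ∧
    (∀ C : Finset N, (∃ C' ∈ 𝒞, C' ⊆ C) ↔ ∀ C'' ∈ 𝒞, (C ∩ C'').Nonempty)

/-- `f` is the M-winning coalition rule associated with `𝒞`. -/
def IsMWCRule {N : Type*} (𝒞 : Set (Finset N)) (f : (N → Bool) → Bool) : Prop :=
  ∀ (R : N → Bool) (x : Bool), f R = x ↔ ∃ C ∈ 𝒞, ∀ i ∈ C, R i = x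

/-- `g` is the sequential unanimity rule associated with the sequence `S`. -/
def IsSURule {N : Type*} {K : ℕ} (S : Fin K → Finset N) (g : (N → Bool) → Bool) : Prop :=
  ∀ (R : N → Bool) (x : Bool),
    g R = x ↔ ∃ k : Fin K, (∀ i ∈ S k, R i = x) ∧
      ∀ l < k, ∃ i ∈ S l, ∃ j ∈ S l, R i ≠ R j

/-- A full-domain rule is neutral if it commutes with flipping the two candidates
(indifference/ties are mapped to themselves). -/
def FullNeutral {N : Type*} (g : (N → Option Bool) → Option Bool) : Prop :=
  ∀ R : N → Option Bool, g (fun i => Option.map not (R i)) = Option.map not (g R)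

/-- The ranking of outcomes by a voter with strict preference for `x`:
`some x ≻ none ≻ some (!x)`. -/
def rankOutcome (x : Bool) : Option Bool → ℕ
  | none => 1
  | some y => if y = x then 2 else 0

/-- A full-domain rule is strategy-proof if no voter with a strict preference can
obtain a strictly better-ranked outcome by misreporting. -/
def FullStrategyProof {N : Type*} [DecidableEq N]
    (g : (N → Option Bool) → Option Bool) : Prop :=
  ∀ (R : N → Option Bool) (i : N) (x : Bool), R i = some x →
    ∀ r : Option Bool, rankOutcome x (g (Function.update R i r)) ≤ rankOutcome x (g R)

/-- `g` is the M-winning coalition rule with default `f` associated with `𝒞`. -/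
def IsMWCFullRule {N : Type*} (𝒞 : Set (Finset N))
    (f g : (N → Option Bool) → Option Bool) : Prop :=
  ∀ R : N → Option Bool,
    (∀ x : Bool, (∃ C ∈ 𝒞, ∀ i ∈ C, R i = some x) → g R = some x) ∧
    ((¬ ∃ x : Bool, ∃ C ∈ 𝒞, ∀ i ∈ C, R i = some x) → g R = f R)

/-- `g` is the sequential unanimity rule with default `f` associated with `S`. -/
def IsSUFullRule {N : Type*} {K : ℕ} (S : Fin K → Finset N)
    (f g : (N → Option Bool) → Option Bool) : Prop :=
  ∀ R : N → Option Bool,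
    (∀ x : Bool, (∃ k : Fin K, (∀ i ∈ S k, R i = some x) ∧
        ∀ l < k, ∃ i ∈ S l, R i = some x) → g R = some x) ∧
    ((¬ ∃ x : Bool, ∃ k : Fin K, (∀ i ∈ S k, R i = some x) ∧
        ∀ l < k, ∃ i ∈ S l, R i = some x) → g R = f R)

/-
Both rules fall back on the same default `f`, so it suffices that, for each candidate `x`, the
set `T` of voters strictly preferring `x` contains a coalition of `𝒞` exactly when it meets the
sequential unanimity condition. If `T` contains `C ∈ 𝒞`, the index `k` the invariant attaches
to `C` witnesses the condition. Conversely, if the condition holds at `k`, then `T` meets every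
`C ∈ 𝒞`: compare `k` with the index `m` attached to `C` (for `m < k`, `m = k`, `m > k` use
`S m ∩ T`, `S k = S m ⊆ C`, `S k ∩ C` respectively), and Moulin's property (P2) turns
"meets every coalition" into "contains a coalition".
-/

section

variable {N : Type*}

def CoalitionUnanimous (𝒞 : Set (Finset N)) (p : N → Prop) : Prop :=
  ∃ C ∈ 𝒞, ∀ i ∈ C, p i

def SeqUnanimous {ι : Type*} [LinearOrder ι] (S : ι → Finset N) (p : N → Prop) : Prop :=
  ∃ k, (∀ i ∈ S k, p i) ∧ ∀ l < k, ∃ i ∈ S l, p i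

theorem IsMWCS.coalitionUnanimous_of_forall_exists [Fintype N] [DecidableEq N]
    {𝒞 : Set (Finset N)} (h𝒞 : IsMWCS 𝒞) {p : N → Prop} [DecidablePred p]
    (hp : ∀ C ∈ 𝒞, ∃ i ∈ C, p i) : CoalitionUnanimous 𝒞 p := by
  obtain ⟨C, hC, hsub⟩ := (h𝒞.2.2.2 {i | p i}).mpr fun C hC => by
    obtain ⟨i, hiC, hi⟩ := hp C hC
    exact ⟨i, Finset.mem_inter.mpr ⟨Finset.mem_filter.mpr ⟨Finset.mem_univ i, hi⟩, hiC⟩⟩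
  exact ⟨C, hC, fun i hi => (Finset.mem_filter.mp (hsub hi)).2⟩

section Invariant

variable [DecidableEq N] {ι : Type*} [LinearOrder ι] {𝒞 : Set (Finset N)} {S : ι → Finset N}

theorem seqUnanimous_of_coalitionUnanimous
    (hinv : ∀ C ∈ 𝒞, ∃ k, S k ⊆ C ∧ ∀ l < k, (S l ∩ C).Nonempty) {p : N → Prop}
    (hp : CoalitionUnanimous 𝒞 p) : SeqUnanimous S p := by
  obtain ⟨C, hC, hCp⟩ := hp
  obtain ⟨k, hkC, hl⟩ := hinv C hC
  refine ⟨k, fun i hi => hCp i (hkC hi), fun l hlk => ?_⟩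
  obtain ⟨i, hi⟩ := hl l hlk
  exact ⟨i, (Finset.mem_inter.mp hi).1, hCp i (Finset.mem_inter.mp hi).2⟩

theorem exists_mem_of_seqUnanimous (hne : ∀ k, (S k).Nonempty)
    (hinv : ∀ C ∈ 𝒞, ∃ k, S k ⊆ C ∧ ∀ l < k, (S l ∩ C).Nonempty) {p : N → Prop}
    (hp : SeqUnanimous S p) : ∀ C ∈ 𝒞, ∃ i ∈ C, p i := by
  obtain ⟨k, hk, hbefore⟩ := hp
  intro C hC
  obtain ⟨m, hmC, hmeets⟩ := hinv C hC
  rcases lt_trichotomy m k with hmk | rfl | hkm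
  · obtain ⟨i, hiS, hi⟩ := hbefore m hmk
    exact ⟨i, hmC hiS, hi⟩
  · obtain ⟨i, hi⟩ := hne m
    exact ⟨i, hmC hi, hk i hi⟩
  · obtain ⟨i, hi⟩ := hmeets k hkm
    exact ⟨i, (Finset.mem_inter.mp hi).2, hk i (Finset.mem_inter.mp hi).1⟩

theorem seqUnanimous_iff_coalitionUnanimous [Fintype N] (h𝒞 : IsMWCS 𝒞)
    (hne : ∀ k, (S k).Nonempty)
    (hinv : ∀ C ∈ 𝒞, ∃ k, S k ⊆ C ∧ ∀ l < k, (S l ∩ C).Nonempty)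
    (p : N → Prop) [DecidablePred p] : SeqUnanimous S p ↔ CoalitionUnanimous 𝒞 p :=
  ⟨fun hp => h𝒞.coalitionUnanimous_of_forall_exists (exists_mem_of_seqUnanimous hne hinv hp),
    seqUnanimous_of_coalitionUnanimous hinv⟩

end Invariant

theorem IsMWCFullRule.eq_of_isSUFullRule {K : ℕ} {𝒞 : Set (Finset N)} {S : Fin K → Finset N}
    {f g g' : (N → Option Bool) → Option Bool} (hg : IsMWCFullRule 𝒞 f g)
    (hg' : IsSUFullRule S f g') {R : N → Option Bool}
    (hR : ∀ x : Bool, SeqUnanimous S (R · = some x) ↔ CoalitionUnanimous 𝒞 (R · = some x)) :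
    g R = g' R := by
  by_cases hC : ∃ x : Bool, CoalitionUnanimous 𝒞 (R · = some x)
  · obtain ⟨x, hx⟩ := hC
    rw [(hg R).1 x hx, (hg' R).1 x ((hR x).mpr hx)]
  · have hS : ¬ ∃ x : Bool, SeqUnanimous S (R · = some x) :=
      fun ⟨x, hx⟩ => hC ⟨x, (hR x).mp hx⟩
    rw [(hg R).2 hC, (hg' R).2 hS]

end

theorem stmt14_general {N : Type*} [Fintype N] [DecidableEq N] {K : ℕ}
    (𝒞 : Set (Finset N)) (h𝒞 : IsMWCS 𝒞)
    (S : Fin (K + 1) → Finset N) (hne : ∀ k, (S k).Nonempty)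
    (hinv : ∀ C ∈ 𝒞, ∃ k : Fin (K + 1), S k ⊆ C ∧ ∀ l < k, (S l ∩ C).Nonempty)
    (f : (N → Option Bool) → Option Bool)
    (g g' : (N → Option Bool) → Option Bool)
    (hg : IsMWCFullRule 𝒞 f g) (hg' : IsSUFullRule S f g')
    (R : N → Option Bool) : g R = g' R :=
  hg.eq_of_isSUFullRule hg' fun _ => seqUnanimous_iff_coalitionUnanimous h𝒞 hne hinv _

/-- Theorem 4 (invariant form): under the Algorithm-1 invariant, the M-winning coalition
rule with default f and the sequential unanimity rule with default f coincide at every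
full profile. -/
theorem stmt14 {N : Type*} [Fintype N] [DecidableEq N] {K : ℕ}
    (𝒞 : Set (Finset N)) (h𝒞 : IsMWCS 𝒞)
    (S : Fin (K + 1) → Finset N) (hne : ∀ k, (S k).Nonempty)
    (hinj : Function.Injective S) (hlast : (S (Fin.last K)).card = 1)
    (hinv : ∀ C ∈ 𝒞, ∃ k : Fin (K + 1), S k ⊆ C ∧ ∀ l < k, (S l ∩ C).Nonempty)
    (f : (N → Option Bool) → Option Bool)
    (hfN : FullNeutral f) (hfSP : FullStrategyProof f)
    (g g' : (N → Option Bool) → Option Bool)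
    (hg : IsMWCFullRule 𝒞 f g) (hg' : IsSUFullRule S f g')
    (R : N → Option Bool) : g R = g' R :=
  stmt14_general 𝒞 h𝒞 S hne hinv f g g' hg hg' R
end

section
/- (Non-essentiality of naive enumerations, Section 3.1.4.) Let N be a finite set of voters, 𝒞 = {C_1,…,C_L} an M-winning coalition set on N, and i ∈ N a voter such that i ∈ C for some C ∈ 𝒞 and {i} ∉ 𝒞. Let S = (C_{σ(1)},…,C_{σ(L)}, {i}) where σ is any enumeration of 𝒞. Then for every index k with i ∈ C_{σ(k)}, the sequential unanimity rule associated with S agrees at every profile with the sequential unanimity rule associated with the sequence obtained from S by deleting C_{σ(k)}; in particular the sequential unanimity rule associated with S is not essential. -/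
theorem IsMWCS.inter_nonempty {N : Type*} [DecidableEq N] {𝒞 : Set (Finset N)}
    (h𝒞 : IsMWCS 𝒞) {C C' : Finset N} (hC : C ∈ 𝒞) (hC' : C' ∈ 𝒞) : (C ∩ C').Nonempty :=
  (h𝒞.2.2.2 C).mp ⟨C, hC, subset_rfl⟩ C' hC'

namespace SequentialUnanimity

variable {N : Type*} {K : ℕ}

def Unanimous (C : Finset N) (R : N → Bool) (x : Bool) : Prop :=
  ∀ i ∈ C, R i = x

def IsSplit (C : Finset N) (R : N → Bool) : Prop :=
  ∃ i ∈ C, ∃ j ∈ C, R i ≠ R j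

/-- The right-hand side of `IsSURule`. -/
def Outcome (S : Fin K → Finset N) (R : N → Bool) (x : Bool) : Prop :=
  ∃ k, Unanimous (S k) R x ∧ ∀ l < k, IsSplit (S l) R

theorem exists_unanimous_of_not_isSplit {C : Finset N} {R : N → Bool} (hC : ¬ IsSplit C R) :
    ∃ x, Unanimous C R x := by
  rcases C.eq_empty_or_nonempty with rfl | ⟨a, ha⟩
  · exact ⟨true, fun _ h => absurd h (Finset.notMem_empty _)⟩
  · exact ⟨R a, fun j hj => not_not.mp fun h => hC ⟨j, hj, a, ha, h⟩⟩

theorem not_isSplit_of_card_le_one {C : Finset N} (hC : C.card ≤ 1) (R : N → Bool) :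
    ¬ IsSplit C R := fun ⟨a, ha, b, hb, hab⟩ =>
  hC.not_gt (Finset.one_lt_card.mpr ⟨a, ha, b, hb, fun h => hab (h ▸ rfl)⟩)

theorem Unanimous.of_not_isSplit_of_inter [DecidableEq N] {T U : Finset N} {R : N → Bool}
    {x : Bool} (hU : Unanimous U R x) (hT : ¬ IsSplit T R) (hTU : (T ∩ U).Nonempty) :
    Unanimous T R x := by
  obtain ⟨a, ha⟩ := hTU
  rw [Finset.mem_inter] at ha
  intro j hj
  by_contra h
  exact hT ⟨j, hj, a, ha.1, by rwa [hU a ha.2]⟩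

theorem exists_outcome_of_card_le_one {S : Fin K → Finset N} (q : Fin K) (hq : (S q).card ≤ 1)
    (R : N → Bool) : ∃ x, Outcome S R x := by
  obtain ⟨m, hm, hmin⟩ := wellFounded_lt.has_min {l | ¬ IsSplit (S l) R}
    ⟨q, not_isSplit_of_card_le_one hq R⟩
  obtain ⟨x, hx⟩ := exists_unanimous_of_not_isSplit hm
  exact ⟨x, m, hx, fun l hl => not_not.mp fun h => hmin l h hl⟩

variable [DecidableEq N] {S : Fin (K + 1) → Finset N} {p : Fin (K + 1)}

theorem Outcome.of_succAbove (hmeet : ∀ m ≠ p, (S m ∩ S p).Nonempty) {R : N → Bool} {x : Bool}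
    (h : Outcome (S ∘ p.succAbove) R x) : Outcome S R x := by
  obtain ⟨m, hun, hsplit⟩ := h
  have hsplit' : ∀ l < p.succAbove m, l ≠ p → IsSplit (S l) R := by
    intro l hl hlp
    obtain ⟨l', rfl⟩ := Fin.exists_succAbove_eq hlp
    exact hsplit l' (Fin.succAbove_lt_succAbove_iff.mp hl)
  by_cases hp : p < p.succAbove m ∧ ¬ IsSplit (S p) R
  · have hmp : (S p ∩ S (p.succAbove m)).Nonempty := by
      rw [Finset.inter_comm]
      exact hmeet _ (Fin.succAbove_ne p m)
    exact ⟨p, hun.of_not_isSplit_of_inter hp.2 hmp,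
      fun l hl => hsplit' l (hl.trans hp.1) hl.ne⟩
  · refine ⟨p.succAbove m, hun, fun l hl => ?_⟩
    by_cases hlp : l = p
    · subst hlp
      exact not_not.mp (not_and.mp hp hl)
    · exact hsplit' l hl hlp

theorem _root_.IsSURule.eq_of_succAbove {g g' : (N → Bool) → Bool} (hg : IsSURule S g)
    (hg' : IsSURule (S ∘ p.succAbove) g') (hmeet : ∀ m ≠ p, (S m ∩ S p).Nonempty) : g = g' :=
  funext fun R => (hg R (g' R)).mpr (Outcome.of_succAbove hmeet ((hg' R (g' R)).mp rfl))

theorem _root_.IsSURule.succAbove {g : (N → Bool) → Bool} (hg : IsSURule S g)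
    (hmeet : ∀ m ≠ p, (S m ∩ S p).Nonempty)
    (htotal : ∀ R, ∃ x, Outcome (S ∘ p.succAbove) R x) : IsSURule (S ∘ p.succAbove) g := by
  intro R x
  obtain ⟨y, hy⟩ := htotal R
  have hgy : g R = y := (hg R y).mpr (Outcome.of_succAbove hmeet hy)
  refine ⟨fun hx => ?_, fun h => (hg R x).mpr (Outcome.of_succAbove hmeet h)⟩
  rw [← hx, hgy]
  exact hy

end SequentialUnanimity

open SequentialUnanimity in
theorem stmt17_general {N : Type*} [DecidableEq N] (𝒞 : Set (Finset N))
    (h𝒞 : IsMWCS 𝒞) {L : ℕ} (e : Fin L → Finset N)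
    (henum : Function.Injective e ∧ ∀ C : Finset N, C ∈ 𝒞 ↔ ∃ j : Fin L, e j = C)
    (i : N) (hi : ∃ C ∈ 𝒞, i ∈ C)
    (g : (N → Bool) → Bool) (hg : IsSURule (Fin.snoc e ({i} : Finset N)) g) :
    (∀ k : Fin L, i ∈ e k →
      ∀ g' : (N → Bool) → Bool,
        IsSURule (fun l : Fin L =>
          (Fin.snoc e ({i} : Finset N) : Fin (L + 1) → Finset N)
            ((k.castSucc).succAbove l)) g' →
        ∀ R : N → Bool, g R = g' R) ∧
    ¬ (∀ k : Fin L,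
        ∀ g' : (N → Bool) → Bool,
          IsSURule (fun l : Fin L =>
            (Fin.snoc e ({i} : Finset N) : Fin (L + 1) → Finset N)
              ((k.castSucc).succAbove l)) g' →
          ∃ R : N → Bool, g R ≠ g' R) := by
  obtain ⟨-, hmem⟩ := henum
  have heC : ∀ j, e j ∈ 𝒞 := fun j => (hmem _).mpr ⟨j, rfl⟩
  let S : Fin (L + 1) → Finset N := Fin.snoc e {i}
  have hmeet : ∀ k, i ∈ e k → ∀ m ≠ k.castSucc, (S m ∩ S k.castSucc).Nonempty := by
    intro k hk m _
    induction m using Fin.lastCases with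
    | last => exact ⟨i, by simp [S, hk]⟩
    | cast j => simpa only [S, Fin.snoc_castSucc] using h𝒞.inter_nonempty (heC j) (heC k)
  refine ⟨fun k hk g' hg' R => congrFun (hg.eq_of_succAbove hg' (hmeet k hk)) R, fun H => ?_⟩
  obtain ⟨C, hC, hiC⟩ := hi
  obtain ⟨k, rfl⟩ := (hmem C).mp hC
  obtain ⟨q, hq⟩ := Fin.exists_succAbove_eq (Fin.castSucc_ne_last k).symm
  have htotal := exists_outcome_of_card_le_one (S := S ∘ k.castSucc.succAbove) q
    (by simp [S, hq])
  obtain ⟨R, hR⟩ := H k g (hg.succAbove (hmeet k hiC) htotal)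
  exact hR rfl

/-- Non-essentiality of naive enumerations: if S enumerates all of 𝒞 followed by a
backstop singleton {i} with {i} ∉ 𝒞, then deleting any term containing i leaves the
associated sequential unanimity rule unchanged; in particular that rule is not
essential. -/
theorem stmt17 {N : Type*} [Fintype N] [DecidableEq N] (𝒞 : Set (Finset N))
    (h𝒞 : IsMWCS 𝒞) {L : ℕ} (e : Fin L → Finset N)
    (henum : Function.Injective e ∧ ∀ C : Finset N, C ∈ 𝒞 ↔ ∃ j : Fin L, e j = C)
    (i : N) (hi : ∃ C ∈ 𝒞, i ∈ C) (hi' : ({i} : Finset N) ∉ 𝒞)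
    (g : (N → Bool) → Bool) (hg : IsSURule (Fin.snoc e ({i} : Finset N)) g) :
    (∀ k : Fin L, i ∈ e k →
      ∀ g' : (N → Bool) → Bool,
        IsSURule (fun l : Fin L =>
          (Fin.snoc e ({i} : Finset N) : Fin (L + 1) → Finset N)
            ((k.castSucc).succAbove l)) g' →
        ∀ R : N → Bool, g R = g' R) ∧
    ¬ (∀ k : Fin L,
        ∀ g' : (N → Bool) → Bool,
          IsSURule (fun l : Fin L =>
            (Fin.snoc e ({i} : Finset N) : Fin (L + 1) → Finset N)
              ((k.castSucc).succAbove l)) g' →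
          ∃ R : N → Bool, g R ≠ g' R) :=
  stmt17_general 𝒞 h𝒞 e henum i hi g hg
end
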